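/- arXiv:1009.2952 — 2 statements merged into one kernel-verified Lean document; each statement's English description precedes it below -/
import Mathlib

section
/- Let d > 1, β > β(d), and h^t > 0. Suppose the recursion y_{n+1} = -h^t + d·φ(y_n) has a fixed point h_t⁺ > 0 that is the largest fixed point, and let H_t⁺ be the largest fixed point of y_{n+1} = h^t + d·φ(y_n); then H_t⁺ > h_t⁺. Moreover, for any sequence of site-fields defined on a tree by h_i^{j+1} = η_i·h^t + Σ_{l∼i} φ(h_l^j) with arbitrary signs η_i ∈ {−1,+1} and each vertex having d children, if all initial fields satisfy h_i^0 ≥ h_t⁺ then h_i^j ≥ h_t⁺ for all i and all j ≥ 0. -/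
/-- The inverse hyperbolic tangent, arctanh x = (1/2)·log((1+x)/(1-x)). -/
noncomputable def artanh (x : ℝ) : ℝ := (1 / 2) * Real.log ((1 + x) / (1 - x))

/-- The one-step Ising tree recursion function φ(x) = arctanh(tanh β · tanh x). -/
noncomputable def phi (β x : ℝ) : ℝ := artanh (Real.tanh β * Real.tanh x)

/-!
Since `tanh β > 0`, the map `φ = φ_β` is continuous, nondecreasing and bounded above by `β`.
Boundedness makes `y ↦ hᵗ + d φ(y) - y` negative far to the right, while at `h_t⁺` it equals
`2hᵗ > 0`; the intermediate value theorem then yields a fixed point of `y ↦ hᵗ + d φ(y)` strictly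
above `h_t⁺`, so the largest one, `H_t⁺`, exceeds `h_t⁺`. For the tree, `ηᵢ hᵗ ≥ -hᵗ` and
monotonicity of `φ` give `h_i^{j+1} ≥ -hᵗ + d φ(h_t⁺) = h_t⁺` by induction on `j`.
-/

open Real

namespace Real

theorem tanh_strictMono : StrictMono tanh := by
  intro a b hab
  by_contra! hba
  have := artanh_le_artanh (neg_one_lt_tanh b) (tanh_lt_one a) hba
  rw [artanh_tanh, artanh_tanh] at this
  linarith

theorem tanh_nonneg_iff {x : ℝ} : 0 ≤ tanh x ↔ 0 ≤ x := by
  simpa using tanh_strictMono.le_iff_le (a := 0) (b := x)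

theorem continuous_tanh : Continuous tanh := by
  rw [show tanh = fun x => sinh x / cosh x from funext tanh_eq_sinh_div_cosh]
  exact continuous_sinh.div continuous_cosh fun x => (cosh_pos x).ne'

end Real

theorem abs_tanh_mul_tanh_lt_one (a b : ℝ) : |tanh a * tanh b| < 1 := by
  rw [abs_mul]
  exact mul_lt_one_of_nonneg_of_lt_one_left (abs_nonneg _) (abs_tanh_lt_one a)
    (abs_tanh_lt_one b).le

theorem phi_eq_artanh (β x : ℝ) : phi β x = Real.artanh (tanh β * tanh x) := by
  have hx := abs_le.mp (abs_tanh_mul_tanh_lt_one β x).le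
  exact (Real.artanh_eq_half_log hx).symm

theorem continuous_phi (β : ℝ) : Continuous (phi β) := by
  have hlt x := abs_lt.mp (abs_tanh_mul_tanh_lt_one β x)
  have hmul : Continuous fun x => tanh β * tanh x := continuous_const.mul continuous_tanh
  unfold phi _root_.artanh
  refine continuous_const.mul (Continuous.log ?_ fun x => ?_)
  · exact (continuous_const.add hmul).div (continuous_const.sub hmul)
      fun x => by linarith [hlt x]
  · exact (div_pos (by linarith [hlt x]) (by linarith [hlt x])).ne'

theorem phi_monotone {β : ℝ} (hβ : 0 ≤ β) : Monotone (phi β) := by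
  intro a b hab
  simp only [phi_eq_artanh]
  refine Real.artanh_le_artanh (abs_lt.mp (abs_tanh_mul_tanh_lt_one β a)).1
    (abs_lt.mp (abs_tanh_mul_tanh_lt_one β b)).2 ?_
  exact mul_le_mul_of_nonneg_left (tanh_strictMono.monotone hab) (tanh_nonneg_iff.mpr hβ)

theorem phi_le {β : ℝ} (hβ : 0 ≤ β) (x : ℝ) : phi β x ≤ β := by
  calc phi β x = Real.artanh (tanh β * tanh x) := phi_eq_artanh β x
    _ ≤ Real.artanh (tanh β) :=
      Real.artanh_le_artanh (abs_lt.mp (abs_tanh_mul_tanh_lt_one β x)).1 (tanh_lt_one β)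
        (mul_le_of_le_one_right (tanh_nonneg_iff.mpr hβ) (tanh_lt_one x).le)
    _ = β := Real.artanh_tanh β

theorem exists_fixedPoint_gt_of_forall_le {f : ℝ → ℝ} (hf : Continuous f) {M : ℝ}
    (hM : ∀ x, f x ≤ M) {y₀ : ℝ} (hy₀ : y₀ < f y₀) : ∃ y, y₀ < y ∧ f y = y := by
  have hle : y₀ ≤ M := hy₀.le.trans (hM y₀)
  obtain ⟨y, hy, hfy⟩ := intermediate_value_Icc' hle (hf.sub continuous_id).continuousOn
    (show (0 : ℝ) ∈ Set.Icc (f M - M) (f y₀ - y₀) from ⟨by linarith [hM M], by linarith⟩)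
  have hfix : f y = y := by simpa [sub_eq_zero] using hfy
  refine ⟨y, lt_of_le_of_ne hy.1 ?_, hfix⟩
  rintro rfl
  linarith

theorem le_tree_recursion {V : Type*} {children : V → Finset V} {η : V → ℝ} {h : ℕ → V → ℝ}
    {β ht a : ℝ} {d : ℕ} (hβ : 0 ≤ β) (hht : 0 ≤ ht) (hcard : ∀ i, (children i).card = d)
    (hη : ∀ i, η i = 1 ∨ η i = -1)
    (hrec : ∀ j i, h (j + 1) i = η i * ht + ∑ l ∈ children i, phi β (h j l))
    (ha : a ≤ -ht + d * phi β a) (h0 : ∀ i, a ≤ h 0 i) : ∀ j i, a ≤ h j i := by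
  intro j
  induction j with
  | zero => exact h0
  | succ j ih =>
    intro i
    have hηi : -ht ≤ η i * ht := by rcases hη i with hη1 | hη1 <;> rw [hη1] <;> linarith
    have hsum : d * phi β a ≤ ∑ l ∈ children i, phi β (h j l) := by
      simpa [hcard i] using
        Finset.card_nsmul_le_sum (children i) _ _ fun l _ => phi_monotone hβ (ih l)
    rw [hrec j i]
    linarith

theorem stmt_6_general (β : ℝ) (d : ℕ) (hβ : 1 < (d : ℝ) * Real.tanh β)
    (ht : ℝ) (hht : 0 < ht)
    (htp Htp : ℝ)
    (htp_fix : htp = -ht + d * phi β htp)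
    (Htp_max : ∀ y : ℝ, y = ht + d * phi β y → y ≤ Htp) :
    htp < Htp ∧
    ∀ (V : Type) (children : V → Finset V) (η : V → ℝ) (h : ℕ → V → ℝ),
      (∀ i, (children i).card = d) →
      (∀ i, η i = 1 ∨ η i = -1) →
      (∀ j i, h (j + 1) i = η i * ht + ∑ l ∈ children i, phi β (h j l)) →
      (∀ i, htp ≤ h 0 i) →
      ∀ j i, htp ≤ h j i := by
  have hβ_nonneg : 0 ≤ β :=
    tanh_nonneg_iff.mp (pos_of_mul_pos_right (one_pos.trans hβ) d.cast_nonneg).le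
  constructor
  · obtain ⟨y, hy, hy_fix⟩ := exists_fixedPoint_gt_of_forall_le
      (continuous_const.add (continuous_const.mul (continuous_phi β)))
      (fun x => add_le_add_right
        (mul_le_mul_of_nonneg_left (phi_le hβ_nonneg x) d.cast_nonneg) ht)
      (show htp < ht + d * phi β htp by linarith)
    exact hy.trans_le (Htp_max y hy_fix.symm)
  · intro V children η h hcard hη hrec h0
    exact le_tree_recursion hβ_nonneg hht.le hcard hη hrec htp_fix.le h0

theorem stmt_6 (β : ℝ) (d : ℕ) (hd : 1 < d) (hβ : 1 < (d : ℝ) * Real.tanh β)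
    (ht : ℝ) (hht : 0 < ht)
    (htp Htp : ℝ) (htp_pos : 0 < htp)
    (htp_fix : htp = -ht + d * phi β htp)
    (htp_max : ∀ y : ℝ, y = -ht + d * phi β y → y ≤ htp)
    (Htp_fix : Htp = ht + d * phi β Htp)
    (Htp_max : ∀ y : ℝ, y = ht + d * phi β y → y ≤ Htp) :
    htp < Htp ∧
    ∀ (V : Type) (children : V → Finset V) (η : V → ℝ) (h : ℕ → V → ℝ),
      (∀ i, (children i).card = d) →
      (∀ i, η i = 1 ∨ η i = -1) →
      (∀ j i, h (j + 1) i = η i * ht + ∑ l ∈ children i, phi β (h j l)) →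
      (∀ i, htp ≤ h 0 i) →
      ∀ j i, htp ≤ h j i :=
  stmt_6_general β d hβ ht hht htp Htp htp_fix Htp_max
end

section
/- Let d > 1 and β > β(d). Then h(β,d) < d·φ(h⁺), where h(β,d) is the critical field of the Ising model on the Cayley tree and h⁺ is the positive fixed point of x ↦ d·φ(x). -/
/-- The critical field h(β,d) of the Ising model on the Cayley tree, where w = tanh β. -/
noncomputable def critField (β d : ℝ) : ℝ :=
  d * artanh (Real.sqrt ((d * Real.tanh β - 1) / (d * (Real.tanh β)⁻¹ - 1)))
    - artanh (Real.sqrt ((d - (Real.tanh β)⁻¹) / (d - Real.tanh β)))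

open Set

theorem artanh_eqOn_real_artanh : EqOn artanh Real.artanh (Icc (-1) 1) :=
  fun _ hx => (Real.artanh_eq_half_log hx).symm

theorem artanh_tanh (x : ℝ) : artanh (Real.tanh x) = x := by
  rw [artanh_eqOn_real_artanh ⟨(Real.neg_one_lt_tanh x).le, (Real.tanh_lt_one x).le⟩,
    Real.artanh_tanh]

theorem strictMonoOn_artanh : StrictMonoOn artanh (Ioo (-1) 1) := by
  intro x hx y hy hxy
  rw [artanh_eqOn_real_artanh (Ioo_subset_Icc_self hx),
    artanh_eqOn_real_artanh (Ioo_subset_Icc_self hy)]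
  exact Real.strictMonoOn_artanh hx hy hxy

theorem artanh_pos {x : ℝ} (hx : x ∈ Ioo 0 1) : 0 < artanh x := by
  rw [artanh_eqOn_real_artanh ⟨by linarith [hx.1], hx.2.le⟩]
  exact Real.artanh_pos hx

theorem hasDerivAt_artanh {t : ℝ} (ht : t ∈ Ioo (-1) 1) :
    HasDerivAt artanh (1 - t ^ 2)⁻¹ t := by
  obtain ⟨h1, h2⟩ := ht
  have h1t : 1 + t ≠ 0 := by linarith
  have h2t : 1 - t ≠ 0 := by linarith
  have h3t : 1 - t ^ 2 ≠ 0 := by nlinarith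
  have hq : HasDerivAt (fun u => (1 + u) / (1 - u))
      ((1 * (1 - t) - (1 + t) * -1) / (1 - t) ^ 2) t :=
    ((hasDerivAt_id t).const_add 1).div ((hasDerivAt_id t).const_sub 1) h2t
  refine ((hq.log (div_ne_zero h1t h2t)).const_mul (1 / 2 : ℝ)).congr_deriv ?_
  field_simp
  ring

theorem mul_mem_Ioo_neg_one_one {w t : ℝ} (hw : |w| ≤ 1) (ht : t ∈ Ioo (-1) 1) :
    w * t ∈ Ioo (-1) 1 := by
  rw [mem_Ioo, ← abs_lt, abs_mul]
  exact mul_lt_one_of_nonneg_of_lt_one_right hw (abs_nonneg t) (abs_lt.mpr ht)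

theorem tanh_pos {x : ℝ} (hx : 0 < x) : 0 < Real.tanh x := by
  rw [Real.tanh_eq_sinh_div_cosh]
  exact div_pos (Real.sinh_pos_iff.mpr hx) (Real.cosh_pos x)

/-- `F(t) = d·artanh(w t) - artanh t`, i.e. `d·φ(x) - x` at `t = tanh x`, `w = tanh β`. -/
noncomputable def fixedPointGap (d w t : ℝ) : ℝ := d * artanh (w * t) - artanh t

/-- `tanh h_c`, where `h_c` is the point with `d·φ'(h_c) = 1`. -/
noncomputable def criticalTanh (d w : ℝ) : ℝ := √((d - w⁻¹) / (d - w))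

theorem hasDerivAt_fixedPointGap {d w t : ℝ} (ht : t ∈ Ioo (-1) 1)
    (hwt : w * t ∈ Ioo (-1) 1) :
    HasDerivAt (fixedPointGap d w) (d * ((1 - (w * t) ^ 2)⁻¹ * w) - (1 - t ^ 2)⁻¹) t := by
  have hw : HasDerivAt (fun u => w * u) w t := by simpa using (hasDerivAt_id t).const_mul w
  exact (((hasDerivAt_artanh hwt).comp t hw).const_mul d).sub (hasDerivAt_artanh ht)

theorem sqrt_div_eq_mul_criticalTanh {d w : ℝ} (hw : 0 < w) :
    √((d * w - 1) / (d * w⁻¹ - 1)) = w * criticalTanh d w := by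
  have : (d * w - 1) / (d * w⁻¹ - 1) = w ^ 2 * ((d - w⁻¹) / (d - w)) := by
    field_simp
  rw [this, criticalTanh, Real.sqrt_mul (sq_nonneg w), Real.sqrt_sq hw.le]

section supercritical

variable {d w : ℝ}

theorem sub_pos_of_one_lt_mul (hw0 : 0 < w) (hw1 : w < 1) (hdw : 1 < d * w) : 0 < d - w := by
  nlinarith

theorem criticalTanh_pos (hw0 : 0 < w) (hw1 : w < 1) (hdw : 1 < d * w) :
    0 < criticalTanh d w :=
  Real.sqrt_pos.mpr <|
    div_pos (sub_pos.mpr ((inv_lt_iff_one_lt_mul₀ hw0).mpr hdw))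
      (sub_pos_of_one_lt_mul hw0 hw1 hdw)

theorem sq_criticalTanh (hw0 : 0 < w) (hw1 : w < 1) (hdw : 1 < d * w) :
    criticalTanh d w ^ 2 = (d - w⁻¹) / (d - w) :=
  Real.sq_sqrt <| div_nonneg (sub_pos.mpr ((inv_lt_iff_one_lt_mul₀ hw0).mpr hdw)).le
    (sub_pos_of_one_lt_mul hw0 hw1 hdw).le

theorem criticalTanh_lt_one (hw0 : 0 < w) (hw1 : w < 1) (hdw : 1 < d * w) :
    criticalTanh d w < 1 := by
  have hw_lt_inv : w < w⁻¹ := hw1.trans ((one_lt_inv₀ hw0).mpr hw1)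
  rw [criticalTanh, Real.sqrt_lt' one_pos, one_pow, div_lt_one (sub_pos_of_one_lt_mul hw0 hw1 hdw)]
  linarith

theorem fixedPointGap_deriv_pos {t : ℝ} (hw0 : 0 < w) (hw1 : w < 1) (hdw : 1 < d * w)
    (ht : t ^ 2 < criticalTanh d w ^ 2) :
    0 < d * ((1 - (w * t) ^ 2)⁻¹ * w) - (1 - t ^ 2)⁻¹ := by
  have hdw' := sub_pos_of_one_lt_mul hw0 hw1 hdw
  have ht1 : t ^ 2 < 1 := ht.trans (pow_lt_one₀ (criticalTanh_pos hw0 hw1 hdw).le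
    (criticalTanh_lt_one hw0 hw1 hdw) two_ne_zero)
  have hwt1 : w ^ 2 * t ^ 2 < 1 := by nlinarith
  have key : w * (d - w) * t ^ 2 < d * w - 1 := by
    rw [sq_criticalTanh hw0 hw1 hdw, lt_div_iff₀ hdw'] at ht
    calc w * (d - w) * t ^ 2 = w * (t ^ 2 * (d - w)) := by ring
      _ < w * (d - w⁻¹) := mul_lt_mul_of_pos_left ht hw0
      _ = d * w - 1 := by field_simp
  rw [mul_pow, show d * ((1 - w ^ 2 * t ^ 2)⁻¹ * w) - (1 - t ^ 2)⁻¹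
      = (d * w * (1 - t ^ 2) - (1 - w ^ 2 * t ^ 2)) / ((1 - w ^ 2 * t ^ 2) * (1 - t ^ 2)) by
    field_simp [(sub_pos.mpr hwt1).ne', (sub_pos.mpr ht1).ne']]
  apply div_pos _ (mul_pos (sub_pos.mpr hwt1) (sub_pos.mpr ht1))
  nlinarith

theorem strictMonoOn_fixedPointGap (hw0 : 0 < w) (hw1 : w < 1) (hdw : 1 < d * w) :
    StrictMonoOn (fixedPointGap d w) (Icc 0 (criticalTanh d w)) := by
  have hmem : ∀ t ∈ Icc 0 (criticalTanh d w), t ∈ Ioo (-1) 1 ∧ w * t ∈ Ioo (-1) 1 := by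
    intro t ⟨h0, h1⟩
    have ht : t ∈ Ioo (-1) 1 := ⟨by linarith, h1.trans_lt (criticalTanh_lt_one hw0 hw1 hdw)⟩
    exact ⟨ht, mul_mem_Ioo_neg_one_one (abs_le.mpr ⟨by linarith, hw1.le⟩) ht⟩
  apply strictMonoOn_of_deriv_pos (convex_Icc _ _)
  · intro t ht
    obtain ⟨h1, h2⟩ := hmem t ht
    exact (hasDerivAt_fixedPointGap h1 h2).continuousAt.continuousWithinAt
  · intro t ht
    rw [interior_Icc] at ht
    obtain ⟨h1, h2⟩ := hmem t (Ioo_subset_Icc_self ht)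
    rw [(hasDerivAt_fixedPointGap h1 h2).deriv]
    exact fixedPointGap_deriv_pos hw0 hw1 hdw (pow_lt_pow_left₀ ht.2 ht.1.le two_ne_zero)

theorem criticalTanh_lt_of_fixedPointGap_eq_zero {t : ℝ} (hw0 : 0 < w) (hw1 : w < 1)
    (hdw : 1 < d * w) (ht : 0 < t) (hfix : fixedPointGap d w t = 0) :
    criticalTanh d w < t := by
  by_contra! hle
  have := strictMonoOn_fixedPointGap hw0 hw1 hdw ⟨le_rfl, (criticalTanh_pos hw0 hw1 hdw).le⟩
    ⟨ht.le, hle⟩ ht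
  have hzero : fixedPointGap d w 0 = 0 := by simp [fixedPointGap, artanh]
  rw [hzero, hfix] at this
  exact this.false

end supercritical

theorem stmt_9 (β d : ℝ) (hd : 1 < d) (hw : 1 < d * Real.tanh β)
    (hp : ℝ) (hp_pos : 0 < hp) (hp_fix : d * phi β hp = hp) :
    critField β d < d * phi β hp := by
  set w := Real.tanh β
  set t := Real.tanh hp
  have hw0 : 0 < w := pos_of_mul_pos_right (one_pos.trans hw) (by linarith)
  have hw1 : w < 1 := Real.tanh_lt_one β
  have hfix : fixedPointGap d w t = 0 := by
    rw [fixedPointGap, artanh_tanh, ← phi, hp_fix, sub_self]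
  set tc := criticalTanh d w
  have htc_mem : tc ∈ Ioo 0 1 := ⟨criticalTanh_pos hw0 hw1 hw, criticalTanh_lt_one hw0 hw1 hw⟩
  have htc : tc < t := criticalTanh_lt_of_fixedPointGap_eq_zero hw0 hw1 hw (tanh_pos hp_pos) hfix
  have hw_abs : |w| ≤ 1 := abs_le.mpr ⟨by linarith, hw1.le⟩
  calc critField β d = d * artanh (w * tc) - artanh tc := by
        rw [critField, sqrt_div_eq_mul_criticalTanh hw0]; rfl
    _ < d * artanh (w * tc) := sub_lt_self _ (artanh_pos htc_mem)
    _ < d * artanh (w * t) := by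
        gcongr
        exact strictMonoOn_artanh
          (mul_mem_Ioo_neg_one_one hw_abs ⟨by linarith [htc_mem.1], htc_mem.2⟩)
          (mul_mem_Ioo_neg_one_one hw_abs ⟨Real.neg_one_lt_tanh hp, Real.tanh_lt_one hp⟩)
          (mul_lt_mul_of_pos_left htc hw0)
    _ = d * phi β hp := rfl
end
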